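/- Let μ be a probability measure on ℝᵐ × ℝⁿ with disintegration μ(dx, dy) = μ_X(dx) κ(x, dy), and let Q : ℝⁿ × ℝᵏ → ℝ be measurable, bounded below, and such that a ↦ Q(y,a) is convex for every y. Let π be a coupling of μ_X with another probability measure ν_X on ℝᵐ, with disintegration π(dx, dx') = μ_X(dx) λ(x, dx'). Then for any measurable g : ℝᵐ → ℝᵏ, defining h(x) := ∫ g(x') λ(x, dx'), one has ∫∫ Q(y, h(x)) κ(x,dy) μ_X(dx) ≤ ∫∫∫ Q(y, g(x')) λ(x,dx') κ(x,dy) μ_X(dx), provided all integrals are finite. -/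

import Mathlib

/-!
For fixed `x`, Jensen's inequality in the second argument of `Q` gives
`Q(y, h x) ≤ ∫ Q(y, g x') λ(x, dx')` for every `y`; integrating in `y` against `κ(x, ·)` and
swapping the two integrals (Tonelli) yields the inequality for the inner integrals, and integrating
in `x` against `μ_X` concludes. Because `Q` is only bounded below, integrals are compared as lower
Lebesgue integrals of `Q - c ≥ 0`: for fixed `y` the map `x' ↦ Q(y, g x')` need not be integrable,
and there the Bochner integral would take the junk value `0`.
-/

open MeasureTheory ProbabilityTheory Set

section BoundedBelow

variable {α β : Type*} [MeasurableSpace α] [MeasurableSpace β] {μ : Measure α} {ν : Measure β}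
  {f : α → ℝ} {c : ℝ}

lemma integrable_iff_lintegral_ofReal_sub_ne_top [IsFiniteMeasure μ]
    (hf : AEStronglyMeasurable f μ) (hc : ∀ᵐ a ∂μ, c ≤ f a) :
    Integrable f μ ↔ ∫⁻ a, ENNReal.ofReal (f a - c) ∂μ ≠ ⊤ := by
  rw [lintegral_ofReal_ne_top_iff_integrable (f := fun a => f a - c)
    (hf.sub aestronglyMeasurable_const)
    (by filter_upwards [hc] with a ha using sub_nonneg.2 ha)]
  simp_rw [sub_eq_add_neg, integrable_add_const_iff]

lemma ofReal_integral_sub_eq_lintegral_ofReal_sub [IsProbabilityMeasure μ]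
    (hf : Integrable f μ) (hc : ∀ᵐ a ∂μ, c ≤ f a) :
    ENNReal.ofReal (∫ a, f a ∂μ - c) = ∫⁻ a, ENNReal.ofReal (f a - c) ∂μ := by
  rw [← ofReal_integral_eq_lintegral_ofReal (f := fun a => f a - c) (hf.sub (integrable_const c))
    (by filter_upwards [hc] with a ha using sub_nonneg.2 ha), integral_sub hf (integrable_const c),
    integral_const, probReal_univ, one_smul]

lemma le_integral_of_ae_le [IsProbabilityMeasure μ] (hf : Integrable f μ)
    (hc : ∀ᵐ a ∂μ, c ≤ f a) : c ≤ ∫ a, f a ∂μ := by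
  simpa using integral_mono_ae (integrable_const c) hf hc

lemma integrable_and_integral_le_of_lintegral_ofReal_sub_le [IsProbabilityMeasure μ]
    [IsProbabilityMeasure ν] {g : β → ℝ} (hf : AEStronglyMeasurable f μ)
    (hfc : ∀ᵐ a ∂μ, c ≤ f a) (hg : Integrable g ν) (hgc : ∀ᵐ b ∂ν, c ≤ g b)
    (hle : ∫⁻ a, ENNReal.ofReal (f a - c) ∂μ ≤ ∫⁻ b, ENNReal.ofReal (g b - c) ∂ν) :
    Integrable f μ ∧ ∫ a, f a ∂μ ≤ ∫ b, g b ∂ν := by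
  have hfi : Integrable f μ := (integrable_iff_lintegral_ofReal_sub_ne_top hf hfc).2 <|
    ne_top_of_le_ne_top ((integrable_iff_lintegral_ofReal_sub_ne_top hg.1 hgc).1 hg) hle
  refine ⟨hfi, ?_⟩
  rw [← ofReal_integral_sub_eq_lintegral_ofReal_sub hfi hfc,
    ← ofReal_integral_sub_eq_lintegral_ofReal_sub hg hgc,
    ENNReal.ofReal_le_ofReal_iff (sub_nonneg.2 (le_integral_of_ae_le hg hgc))] at hle
  linarith

end BoundedBelow

section Jensen

variable {α : Type*} [MeasurableSpace α] {μ : Measure α} [IsProbabilityMeasure μ] {c : ℝ}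
  {E : Type*} [NormedAddCommGroup E] [NormedSpace ℝ E] [FiniteDimensional ℝ E]

lemma ConvexOn.ofReal_map_integral_sub_le_lintegral {φ : E → ℝ} (hφ : ConvexOn ℝ univ φ)
    (hc : ∀ x, c ≤ φ x) {f : α → E} (hf : Integrable f μ) :
    ENNReal.ofReal (φ (∫ a, f a ∂μ) - c) ≤ ∫⁻ a, ENNReal.ofReal (φ (f a) - c) ∂μ := by
  have hφc : Continuous φ := continuousOn_univ.1 (hφ.continuousOn isOpen_univ)
  have hcf : ∀ᵐ a ∂μ, c ≤ φ (f a) := ae_of_all _ fun a => hc _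
  by_cases hfin : ∫⁻ a, ENNReal.ofReal (φ (f a) - c) ∂μ = ⊤
  · simp [hfin]
  have hφf : Integrable (fun a => φ (f a)) μ :=
    (integrable_iff_lintegral_ofReal_sub_ne_top (hφc.comp_aestronglyMeasurable hf.1) hcf).2 hfin
  rw [← ofReal_integral_sub_eq_lintegral_ofReal_sub hφf hcf]
  gcongr
  exact hφ.map_integral_le hφc.continuousOn isClosed_univ (ae_of_all _ fun _ => mem_univ _) hf hφf

lemma integrable_and_integral_map_integral_le_integral_integral [MeasurableSpace E]
    {β : Type*} [MeasurableSpace β] {ν : Measure β} [IsProbabilityMeasure ν] {Q : β → E → ℝ}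
    (hQ : Measurable (Function.uncurry Q)) (hQc : ∀ y a, c ≤ Q y a)
    (hQconv : ∀ y, ConvexOn ℝ univ (Q y)) {g : α → E} (hg : Measurable g) (hgi : Integrable g μ)
    (hQg : ∀ᵐ x ∂μ, Integrable (fun y => Q y (g x)) ν)
    (hQgi : Integrable (fun x => ∫ y, Q y (g x) ∂ν) μ) :
    Integrable (fun y => Q y (∫ x, g x ∂μ)) ν ∧
      ∫ y, Q y (∫ x, g x ∂μ) ∂ν ≤ ∫ x, ∫ y, Q y (g x) ∂ν ∂μ := by
  refine integrable_and_integral_le_of_lintegral_ofReal_sub_le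
    (hQ.comp (measurable_id.prodMk measurable_const)).aestronglyMeasurable
    (ae_of_all _ fun y => hQc _ _) hQgi
    (by filter_upwards [hQg] with x hx using le_integral_of_ae_le hx (ae_of_all _ fun y => hQc _ _))
    ?_
  calc ∫⁻ y, ENNReal.ofReal (Q y (∫ x, g x ∂μ) - c) ∂ν
      ≤ ∫⁻ y, ∫⁻ x, ENNReal.ofReal (Q y (g x) - c) ∂μ ∂ν :=
        lintegral_mono fun y => (hQconv y).ofReal_map_integral_sub_le_lintegral (hQc y) hgi
    _ = ∫⁻ x, ∫⁻ y, ENNReal.ofReal (Q y (g x) - c) ∂ν ∂μ :=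
        lintegral_lintegral_swap (by fun_prop)
    _ = ∫⁻ x, ENNReal.ofReal (∫ y, Q y (g x) ∂ν - c) ∂μ := by
        refine lintegral_congr_ae ?_
        filter_upwards [hQg] with x hx
        exact (ofReal_integral_sub_eq_lintegral_ofReal_sub hx (ae_of_all _ fun y => hQc _ _)).symm

end Jensen

theorem jensen_step_convex_cost_general
    (m nn k : ℕ)
    (μX : Measure (Fin m → ℝ)) [IsProbabilityMeasure μX]
    (κ : Kernel (Fin m → ℝ) (Fin nn → ℝ)) [IsMarkovKernel κ]
    (lam : Kernel (Fin m → ℝ) (Fin m → ℝ)) [IsMarkovKernel lam]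
    (Q : (Fin nn → ℝ) → EuclideanSpace ℝ (Fin k) → ℝ)
    (hQmeas : Measurable (Function.uncurry Q))
    (c : ℝ) (hQbd : ∀ y a, c ≤ Q y a)
    (hQconv : ∀ y, ConvexOn ℝ Set.univ (Q y))
    (g : (Fin m → ℝ) → EuclideanSpace ℝ (Fin k)) (hg : Measurable g)
    (hgint : ∀ x, Integrable g (lam x))
    (hint2 : ∀ x x', Integrable (fun y => Q y (g x')) (κ x))
    (hint3 : ∀ x, Integrable (fun x' => ∫ y, Q y (g x') ∂(κ x)) (lam x))
    (hint5 : Integrable (fun x => ∫ x', ∫ y, Q y (g x') ∂(κ x) ∂(lam x)) μX) :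
    ∫ x, ∫ y, Q y (∫ x', g x' ∂(lam x)) ∂(κ x) ∂μX
      ≤ ∫ x, ∫ x', ∫ y, Q y (g x') ∂(κ x) ∂(lam x) ∂μX := by
  have hinner x := integrable_and_integral_map_integral_le_integral_integral hQmeas hQbd hQconv hg
    (hgint x) (ae_of_all _ (hint2 x)) (hint3 x)
  have hmean : Measurable fun x => ∫ x', g x' ∂lam x :=
    (hg.stronglyMeasurable.comp_measurable measurable_snd).integral_kernel_prod_right'.measurable
  have hlhs : AEStronglyMeasurable (fun x => ∫ y, Q y (∫ x', g x' ∂lam x) ∂κ x) μX :=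
    (hQmeas.comp (measurable_snd.prodMk (hmean.comp measurable_fst))).stronglyMeasurable
      |>.integral_kernel_prod_right' |>.aestronglyMeasurable
  have hlhs_ge x : c ≤ ∫ y, Q y (∫ x', g x' ∂lam x) ∂κ x :=
    le_integral_of_ae_le (hinner x).1 (ae_of_all _ fun y => hQbd _ _)
  refine integral_mono ?_ hint5 fun x => (hinner x).2
  exact integrable_of_le_of_le hlhs (ae_of_all _ hlhs_ge) (ae_of_all _ fun x => (hinner x).2)
    (integrable_const c) hint5

/-- The Jensen's-inequality step: replacing a randomized control `g(x')`, averaged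
over the coupling kernel `lam(x, ·)`, by its conditional mean `h(x) = ∫ g dlam(x,·)`
does not increase the expected convex cost. -/
theorem jensen_step_convex_cost
    (m nn k : ℕ)
    (μX : Measure (Fin m → ℝ)) [IsProbabilityMeasure μX]
    (κ : Kernel (Fin m → ℝ) (Fin nn → ℝ)) [IsMarkovKernel κ]
    (lam : Kernel (Fin m → ℝ) (Fin m → ℝ)) [IsMarkovKernel lam]
    (Q : (Fin nn → ℝ) → EuclideanSpace ℝ (Fin k) → ℝ)
    (hQmeas : Measurable (Function.uncurry Q))
    (c : ℝ) (hQbd : ∀ y a, c ≤ Q y a)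
    (hQconv : ∀ y, ConvexOn ℝ Set.univ (Q y))
    (g : (Fin m → ℝ) → EuclideanSpace ℝ (Fin k)) (hg : Measurable g)
    (hgint : ∀ x, Integrable g (lam x))
    (hint1 : ∀ x, Integrable (fun y => Q y (∫ x', g x' ∂(lam x))) (κ x))
    (hint2 : ∀ x x', Integrable (fun y => Q y (g x')) (κ x))
    (hint3 : ∀ x, Integrable (fun x' => ∫ y, Q y (g x') ∂(κ x)) (lam x))
    (hint4 : Integrable (fun x => ∫ y, Q y (∫ x', g x' ∂(lam x)) ∂(κ x)) μX)
    (hint5 : Integrable (fun x => ∫ x', ∫ y, Q y (g x') ∂(κ x) ∂(lam x)) μX) :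
    ∫ x, ∫ y, Q y (∫ x', g x' ∂(lam x)) ∂(κ x) ∂μX
      ≤ ∫ x, ∫ x', ∫ y, Q y (g x') ∂(κ x) ∂(lam x) ∂μX :=
  jensen_step_convex_cost_general m nn k μX κ lam Q hQmeas c hQbd hQconv g hg hgint hint2 hint3
    hint5
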